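/- arXiv:2506.23803 — 4 statements merged into one kernel-verified Lean document; each statement's English description precedes it below -/
import Mathlib

section
/- Let ℋ ⊆ 𝕊 satisfy Assumption (A1), let B ∈ ℋ ∩ 𝕊₊₊ satisfy BH = HB for all H ∈ ℋ, let δ, η > 0, let g₀,…,g_k ∈ ℝ^d, and set S_i := Σ_{j=0}^i g_j g_jᵀ and H_i := η (δ I + P_ℋ(S_i))^{−1/2}. Then Σ_{i=0}^k gᵢᵀ B Hᵢ² gᵢ ≤ η² (tr B) · ln( (η²/δ) · (tr(H_k^{−1}))² ). -/
open Matrix MeasureTheory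
noncomputable section
set_option maxHeartbeats 1000000


/-- Spectral operator function `ψ(A)` of a symmetric (Hermitian) real matrix,
defined via an eigendecomposition; junk value `0` for non-Hermitian input. -/
def matFun {d : ℕ} (ψ : ℝ → ℝ) (A : Matrix (Fin d) (Fin d) ℝ) : Matrix (Fin d) (Fin d) ℝ :=
  if hA : A.IsHermitian then
    (hA.eigenvectorUnitary : Matrix (Fin d) (Fin d) ℝ) *
      Matrix.diagonal (fun i => ψ (hA.eigenvalues i)) *
      star (hA.eigenvectorUnitary : Matrix (Fin d) (Fin d) ℝ)
  else 0

/-- `P` is the orthogonal projection (w.r.t. the trace inner product `⟨A,B⟩ = tr(AB)`)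
onto the subspace `ℋ`. -/
structure IsOrthProj {d : ℕ} (ℋ : Submodule ℝ (Matrix (Fin d) (Fin d) ℝ))
    (P : Matrix (Fin d) (Fin d) ℝ →ₗ[ℝ] Matrix (Fin d) (Fin d) ℝ) : Prop where
  mem : ∀ A, P A ∈ ℋ
  perp : ∀ A, ∀ H ∈ ℋ, Matrix.trace ((A - P A) * H) = 0

/-- Assumption (A1): `ℋ ⊆ 𝕊` is a linear subspace of symmetric matrices, `P` is the
orthogonal projection onto `ℋ`, `P` maps `𝕊₊₊` into `𝕊₊₊`, and `ℋ` is closed under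
operator functions. -/
structure AssumptionA1 {d : ℕ} (ℋ : Submodule ℝ (Matrix (Fin d) (Fin d) ℝ))
    (P : Matrix (Fin d) (Fin d) ℝ →ₗ[ℝ] Matrix (Fin d) (Fin d) ℝ) : Prop where
  symm : ∀ A ∈ ℋ, A.IsHermitian
  proj : IsOrthProj ℋ P
  posdef : ∀ A : Matrix (Fin d) (Fin d) ℝ, A.PosDef → (P A).PosDef
  funClosed : ∀ A ∈ ℋ, ∀ ψ : ℝ → ℝ, matFun ψ A ∈ ℋ

/-- Spectral (operator) norm of a square real matrix. -/
def opNorm {d : ℕ} (A : Matrix (Fin d) (Fin d) ℝ) : ℝ :=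
  ‖Matrix.toEuclideanCLM (𝕜 := ℝ) A‖

/-- The norm `R(x) = ‖P_ℋ(x xᵀ)‖_op^{1/2}`. -/
def Rnorm {d : ℕ} (P : Matrix (Fin d) (Fin d) ℝ →ₗ[ℝ] Matrix (Fin d) (Fin d) ℝ)
    (x : Fin d → ℝ) : ℝ :=
  Real.sqrt (opNorm (P (vecMulVec x x)))

/-- `g` is a subgradient of `f` at `x`. -/
def SubgradAt {d : ℕ} (f : (Fin d → ℝ) → ℝ) (x g : Fin d → ℝ) : Prop :=
  ∀ y, f x + g ⬝ᵥ (y - x) ≤ f y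

namespace FTLaux

variable {d : ℕ} {A X Y B C M N : Matrix (Fin d) (Fin d) ℝ} {ψ φ : ℝ → ℝ}

theorem matFun_of (hA : A.IsHermitian) (ψ : ℝ → ℝ) :
    matFun ψ A = (hA.eigenvectorUnitary : Matrix (Fin d) (Fin d) ℝ) *
      Matrix.diagonal (fun i => ψ (hA.eigenvalues i)) *
      star (hA.eigenvectorUnitary : Matrix (Fin d) (Fin d) ℝ) := by
  rw [matFun, dif_pos hA]

theorem matFun_isHermitian (hA : A.IsHermitian) (ψ : ℝ → ℝ) : (matFun ψ A).IsHermitian := by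
  rw [matFun_of hA]
  unfold Matrix.IsHermitian
  simp only [star_eq_conjTranspose, conjTranspose_mul, conjTranspose_conjTranspose,
    diagonal_conjTranspose]
  simp [mul_assoc, Pi.star_def]

theorem matFun_mul (hA : A.IsHermitian) (ψ φ : ℝ → ℝ) :
    matFun ψ A * matFun φ A = matFun (fun t => ψ t * φ t) A := by
  rw [matFun_of hA ψ, matFun_of hA φ, matFun_of hA]
  have h1 : (star (hA.eigenvectorUnitary : Matrix (Fin d) (Fin d) ℝ)) *
      (hA.eigenvectorUnitary : Matrix (Fin d) (Fin d) ℝ) = 1 :=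
    Unitary.star_mul_self_of_mem (SetLike.coe_mem _)
  calc _ = (hA.eigenvectorUnitary : Matrix (Fin d) (Fin d) ℝ) *
      Matrix.diagonal (fun i => ψ (hA.eigenvalues i)) *
      ((star (hA.eigenvectorUnitary : Matrix (Fin d) (Fin d) ℝ)) *
      (hA.eigenvectorUnitary : Matrix (Fin d) (Fin d) ℝ)) *
      (Matrix.diagonal (fun i => φ (hA.eigenvalues i)) *
      star (hA.eigenvectorUnitary : Matrix (Fin d) (Fin d) ℝ)) := by
        simp only [mul_assoc]
    _ = _ := by
        rw [h1, mul_one]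
        simp only [mul_assoc, ← mul_assoc (Matrix.diagonal _) (Matrix.diagonal _),
          diagonal_mul_diagonal]

theorem matFun_congr (hA : A.IsHermitian)
    (h : ∀ i, ψ (hA.eigenvalues i) = φ (hA.eigenvalues i)) : matFun ψ A = matFun φ A := by
  rw [matFun_of hA, matFun_of hA]
  congr 2
  exact congrArg _ (funext h)

theorem matFun_id (hA : A.IsHermitian) : matFun (fun t => t) A = A := by
  rw [matFun_of hA]
  conv_rhs => rw [hA.spectral_theorem]
  rfl

theorem matFun_const (hA : A.IsHermitian) (c : ℝ) :
    matFun (fun _ => c) A = c • 1 := by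
  rw [matFun_of hA]
  have hD : (Matrix.diagonal (fun _ : Fin d => c)) = c • (1 : Matrix (Fin d) (Fin d) ℝ) := by
    ext i j
    by_cases h : i = j <;> simp [Matrix.diagonal, h, Matrix.one_apply]
  rw [hD, mul_smul_comm, mul_one, smul_mul_assoc,
    Unitary.mul_star_self_of_mem (SetLike.coe_mem _)]

theorem matFun_one (hA : A.IsHermitian) : matFun (fun _ => (1:ℝ)) A = 1 := by
  rw [matFun_const hA, one_smul]

theorem matFun_sub (hA : A.IsHermitian) (ψ φ : ℝ → ℝ) :
    matFun (fun t => ψ t - φ t) A = matFun ψ A - matFun φ A := by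
  rw [matFun_of hA, matFun_of hA, matFun_of hA]
  have : (Matrix.diagonal (fun i => ψ (hA.eigenvalues i) - φ (hA.eigenvalues i)))
      = Matrix.diagonal (fun i => ψ (hA.eigenvalues i))
        - Matrix.diagonal (fun i => φ (hA.eigenvalues i)) := by
    rw [Matrix.diagonal_sub]
  rw [this, mul_sub, sub_mul]

theorem matFun_posSemidef (hA : A.IsHermitian)
    (h : ∀ i, 0 ≤ ψ (hA.eigenvalues i)) : (matFun ψ A).PosSemidef := by
  rw [matFun_of hA, star_eq_conjTranspose]
  exact (Matrix.posSemidef_diagonal_iff.2 h).mul_mul_conjTranspose_same _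

theorem commute_matFun (hA : A.IsHermitian) (ψ : ℝ → ℝ)
    (h : X * A = A * X) : X * matFun ψ A = matFun ψ A * X := by
  set U : Matrix (Fin d) (Fin d) ℝ := (hA.eigenvectorUnitary : Matrix (Fin d) (Fin d) ℝ) with hU
  have hVU : star U * U = 1 := Unitary.star_mul_self_of_mem (SetLike.coe_mem _)
  have hUV : U * star U = 1 := Unitary.mul_star_self_of_mem (SetLike.coe_mem _)
  set Dψ := Matrix.diagonal (fun i => ψ (hA.eigenvalues i)) with hDψ
  set D := Matrix.diagonal (fun i => (hA.eigenvalues i : ℝ)) with hD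
  set Mm := star U * X * U with hM
  have hspec : A = U * D * star U := by
    conv_lhs => rw [hA.spectral_theorem]
    rfl
  have hcomm : Mm * D = D * Mm := by
    have h1 : star U * (X * A) * U = Mm * D := by
      rw [hspec]
      calc star U * (X * (U * D * star U)) * U
          = (star U * X * U) * D * (star U * U) := by simp only [mul_assoc]
        _ = Mm * D := by rw [hVU, mul_one]
    have h2 : star U * (A * X) * U = D * Mm := by
      rw [hspec]
      calc star U * (U * D * star U * X) * U
          = (star U * U) * (D * (star U * X * U)) := by simp only [mul_assoc]
        _ = D * Mm := by rw [hVU, one_mul]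
    rw [← h1, ← h2, h]
  have hent : ∀ i j, Mm i j * hA.eigenvalues j = hA.eigenvalues i * Mm i j := by
    intro i j
    have := congrFun (congrFun hcomm i) j
    simpa [hD, Matrix.mul_diagonal, Matrix.diagonal_mul] using this
  have hcommψ : Mm * Dψ = Dψ * Mm := by
    ext i j
    rw [hDψ, Matrix.mul_diagonal, Matrix.diagonal_mul]
    rcases eq_or_ne (hA.eigenvalues i) (hA.eigenvalues j) with he | he
    · rw [he, mul_comm]
    · have h0 : Mm i j * (hA.eigenvalues j - hA.eigenvalues i) = 0 := by
        have h' := hent i j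
        ring_nf
        ring_nf at h'
        linarith
      have h00 : Mm i j = 0 := by
        rcases mul_eq_zero.1 h0 with h' | h'
        · exact h'
        · exact absurd (by linarith : hA.eigenvalues i = hA.eigenvalues j) he
      simp [h00]
  have hXU : X * U = U * Mm := by
    calc X * U = (U * star U) * X * U := by rw [hUV, one_mul]
      _ = U * Mm := by simp only [hM, mul_assoc]
  have hMV : Mm * star U = star U * X := by
    calc Mm * star U = star U * X * (U * star U) := by simp only [hM, mul_assoc]
      _ = star U * X := by rw [hUV, mul_one]
  rw [matFun_of hA]
  calc X * (U * Dψ * star U) = (X * U) * Dψ * star U := by simp only [mul_assoc]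
    _ = U * (Mm * Dψ) * star U := by rw [hXU]; simp only [mul_assoc]
    _ = U * Dψ * (Mm * star U) := by rw [hcommψ]; simp only [mul_assoc]
    _ = U * Dψ * star U * X := by rw [hMV]; simp only [mul_assoc]

theorem trace_mul_diagonal (M : Matrix (Fin d) (Fin d) ℝ) (v : Fin d → ℝ) :
    Matrix.trace (M * Matrix.diagonal v) = ∑ i, M i i * v i := by
  simp [Matrix.trace, Matrix.diag, Matrix.mul_diagonal]

/-- master trace expansion: `tr (ψ(X) * N) = Σ ψ(ξ i) * (U* N U)ᵢᵢ`. -/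
theorem trace_matFun_mul (hX : X.IsHermitian) (ψ : ℝ → ℝ) (N : Matrix (Fin d) (Fin d) ℝ) :
    Matrix.trace (matFun ψ X * N) =
      ∑ i, ψ (hX.eigenvalues i) *
        ((star (hX.eigenvectorUnitary : Matrix (Fin d) (Fin d) ℝ)) * N *
          (hX.eigenvectorUnitary : Matrix (Fin d) (Fin d) ℝ)) i i := by
  set U : Matrix (Fin d) (Fin d) ℝ := (hX.eigenvectorUnitary : Matrix (Fin d) (Fin d) ℝ)
  set D := Matrix.diagonal (fun i => ψ (hX.eigenvalues i)) with hD
  rw [matFun_of hX]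
  calc Matrix.trace (U * D * star U * N)
      = Matrix.trace ((U * D) * (star U) * N) := by simp only [mul_assoc]
    _ = Matrix.trace (N * (U * D) * star U) := Matrix.trace_mul_cycle _ _ _
    _ = Matrix.trace (star U * N * (U * D)) := Matrix.trace_mul_cycle _ _ _
    _ = Matrix.trace ((star U * N * U) * D) := by simp only [mul_assoc]
    _ = ∑ i, (star U * N * U) i i * ψ (hX.eigenvalues i) := trace_mul_diagonal _ _
    _ = _ := by simp [mul_comm]

/-- diagonal entries of a conjugated matrix are quadratic forms in the columns. -/
theorem conj_diag_entry (N Q : Matrix (Fin d) (Fin d) ℝ) (i : Fin d) :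
    (star Q * N * Q) i i = (fun a => Q a i) ⬝ᵥ (N *ᵥ fun a => Q a i) := by
  simp only [Matrix.mul_apply, Matrix.star_apply, dotProduct, Matrix.mulVec, star_trivial,
    Finset.sum_mul, Finset.mul_sum]
  rw [Finset.sum_comm]
  exact Finset.sum_congr rfl fun a _ => Finset.sum_congr rfl fun b _ => by ring

/-- pulling a symmetric matrix across a dot product. -/
theorem dotProduct_mulVec_symm (hC : C.IsHermitian) (v x : Fin d → ℝ) :
    v ⬝ᵥ (C *ᵥ x) = (C *ᵥ v) ⬝ᵥ x := by
  have hCt : Cᵀ = C := by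
    ext i j
    have := congrFun (congrFun hC.eq i) j
    simpa [Matrix.conjTranspose_apply] using this
  rw [Matrix.dotProduct_mulVec]
  congr 1
  rw [← hCt, Matrix.vecMul_transpose, hCt]

/-- quadratic form of `ψ(Y)` expanded in the eigenbasis of `Y`. -/
theorem quadform_matFun (hY : Y.IsHermitian) (ψ : ℝ → ℝ) (w : Fin d → ℝ) :
    w ⬝ᵥ (matFun ψ Y *ᵥ w) =
      ∑ j, ψ (hY.eigenvalues j) *
        ((w ᵥ* (hY.eigenvectorUnitary : Matrix (Fin d) (Fin d) ℝ)) j) ^ 2 := by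
  set U : Matrix (Fin d) (Fin d) ℝ := (hY.eigenvectorUnitary : Matrix (Fin d) (Fin d) ℝ)
  set z := w ᵥ* U with hz
  have hzz : (star U) *ᵥ w = z := by
    funext j
    simp only [hz, Matrix.mulVec, Matrix.vecMul, dotProduct, Matrix.star_apply,
      star_trivial]
    exact Finset.sum_congr rfl fun a _ => by ring
  rw [matFun_of hY]
  rw [← Matrix.mulVec_mulVec, ← Matrix.mulVec_mulVec, hzz, Matrix.dotProduct_mulVec]
  rw [show w ᵥ* U = z from rfl]
  simp only [dotProduct, Matrix.mulVec_diagonal]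
  exact Finset.sum_congr rfl fun j _ => by ring

/-- the scalar Klein inequality applied along a vector. -/
theorem klein_vec (hY : Y.PosDef) {ξ : ℝ} (hξ : 0 < ξ) (w : Fin d → ℝ) :
    w ⬝ᵥ (matFun Real.log Y *ᵥ w) ≤
      (w ⬝ᵥ w) * Real.log ξ - (w ⬝ᵥ w) + ξ⁻¹ * (w ⬝ᵥ (Y *ᵥ w)) := by
  have hYh : Y.IsHermitian := hY.1
  have h1 := quadform_matFun hYh (fun _ => (1:ℝ)) w
  rw [matFun_one hYh, Matrix.one_mulVec] at h1
  have hid := quadform_matFun hYh (fun t => t) w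
  rw [matFun_id hYh] at hid
  rw [quadform_matFun hYh, h1, hid, Finset.sum_mul, Finset.mul_sum, ← Finset.sum_sub_distrib,
    ← Finset.sum_add_distrib]
  refine Finset.sum_le_sum fun j _ => ?_
  set z := (w ᵥ* (hYh.eigenvectorUnitary : Matrix (Fin d) (Fin d) ℝ)) j
  set μ := hYh.eigenvalues j with hμdef
  have hμ : 0 < μ := hY.eigenvalues_pos j
  have hlog : Real.log μ ≤ Real.log ξ - 1 + μ / ξ := by
    have h2 := Real.log_le_sub_one_of_pos (div_pos hμ hξ)
    rw [Real.log_div hμ.ne' hξ.ne'] at h2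
    linarith
  have hz2 : (0:ℝ) ≤ z ^ 2 := sq_nonneg _
  have h3 := mul_le_mul_of_nonneg_left hlog hz2
  have hdiv : μ / ξ = ξ⁻¹ * μ := by ring
  nlinarith [h3]

/-- The weighted Klein inequality:
`tr (B log Y) + tr B ≤ tr (B log X) + tr (B X⁻¹ Y)` for `B` PSD commuting with `X`. -/
theorem key (hB : B.PosSemidef) (hX : X.PosDef) (hY : Y.PosDef)
    (hcomm : B * X = X * B) :
    Matrix.trace (B * matFun Real.log Y) + Matrix.trace B ≤
      Matrix.trace (B * matFun Real.log X) +
        Matrix.trace (B * (matFun (fun t => t⁻¹) X * Y)) := by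
  have hXh : X.IsHermitian := hX.1
  have hBh : B.IsHermitian := hB.1
  set C := matFun Real.sqrt B with hCdef
  have hCh : C.IsHermitian := matFun_isHermitian hBh _
  have hCC : C * C = B := by
    rw [hCdef, matFun_mul hBh]
    rw [matFun_congr hBh (φ := fun t => t)
      (fun i => Real.mul_self_sqrt (hB.eigenvalues_nonneg i))]
    exact matFun_id hBh
  have hXC : C * X = X * C := (commute_matFun hBh _ hcomm.symm).symm
  set invX := matFun (fun t => t⁻¹) X with hinvXdef
  have hCinv : C * invX = invX * C := commute_matFun hXh _ hXC
  set U : Matrix (Fin d) (Fin d) ℝ := (hXh.eigenvectorUnitary : Matrix (Fin d) (Fin d) ℝ) with hUdef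
  set w : Fin d → (Fin d → ℝ) := fun i => C *ᵥ (fun a => U a i) with hwdef
  have hexp : ∀ (ψ : ℝ → ℝ) (M : Matrix (Fin d) (Fin d) ℝ),
      Matrix.trace (matFun ψ X * (C * M * C)) =
        ∑ i, ψ (hXh.eigenvalues i) * (w i ⬝ᵥ (M *ᵥ w i)) := by
    intro ψ M
    rw [trace_matFun_mul hXh]
    refine Finset.sum_congr rfl fun i _ => ?_
    congr 1
    rw [conj_diag_entry, ← Matrix.mulVec_mulVec, ← Matrix.mulVec_mulVec,
      dotProduct_mulVec_symm hCh]
  have TlogY : Matrix.trace (B * matFun Real.log Y) =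
      ∑ i, w i ⬝ᵥ (matFun Real.log Y *ᵥ w i) := by
    have e1 : B * matFun Real.log Y = C * C * matFun Real.log Y := by rw [hCC]
    rw [e1, Matrix.trace_mul_cycle C C (matFun Real.log Y)]
    have e2 : Matrix.trace (matFun Real.log Y * C * C)
        = Matrix.trace (matFun (fun _ => (1:ℝ)) X * (C * matFun Real.log Y * C)) := by
      rw [matFun_one hXh, one_mul, Matrix.trace_mul_cycle]
    rw [e2, hexp]
    simp
  have TB : Matrix.trace B = ∑ i, w i ⬝ᵥ w i := by
    have e1 : B = C * (1 : Matrix (Fin d) (Fin d) ℝ) * C := by rw [mul_one, hCC]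
    conv_lhs => rw [e1]
    have e2 : Matrix.trace (C * 1 * C)
        = Matrix.trace (matFun (fun _ => (1:ℝ)) X * (C * 1 * C)) := by
      rw [matFun_one hXh, one_mul]
    rw [e2, hexp]
    simp
  have TlogX : Matrix.trace (B * matFun Real.log X) =
      ∑ i, Real.log (hXh.eigenvalues i) * (w i ⬝ᵥ w i) := by
    rw [Matrix.trace_mul_comm]
    have e1 : B = C * (1 : Matrix (Fin d) (Fin d) ℝ) * C := by rw [mul_one, hCC]
    conv_lhs => rw [e1]
    rw [hexp]
    simp
  have Tinv : Matrix.trace (B * (invX * Y)) =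
      ∑ i, (hXh.eigenvalues i)⁻¹ * (w i ⬝ᵥ (Y *ᵥ w i)) := by
    have e1 : B * (invX * Y) = C * (invX * (C * Y)) := by
      rw [← hCC]
      calc C * C * (invX * Y) = C * ((C * invX) * Y) := by simp only [mul_assoc]
        _ = C * ((invX * C) * Y) := by rw [hCinv]
        _ = C * (invX * (C * Y)) := by simp only [mul_assoc]
    rw [e1, Matrix.trace_mul_comm]
    have e2 : invX * (C * Y) * C = invX * (C * Y * C) := by simp only [mul_assoc]
    rw [e2, hexp]
  rw [TlogY, TB, TlogX, Tinv, ← Finset.sum_add_distrib, ← Finset.sum_add_distrib]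
  refine Finset.sum_le_sum fun i _ => ?_
  have := klein_vec hY (hX.eigenvalues_pos i) (w i)
  linarith

theorem trace_matFun (hA : A.IsHermitian) (ψ : ℝ → ℝ) :
    Matrix.trace (matFun ψ A) = ∑ i, ψ (hA.eigenvalues i) := by
  have h := trace_matFun_mul hA ψ 1
  rw [mul_one] at h
  rw [h]
  refine Finset.sum_congr rfl fun i _ => ?_
  rw [mul_one, Unitary.star_mul_self_of_mem (SetLike.coe_mem _), Matrix.one_apply_eq, mul_one]

theorem psd_trace_nonneg (hM : M.PosSemidef) : 0 ≤ Matrix.trace M := by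
  exact hM.trace_nonneg

theorem trace_mul_psd_nonneg (hB : B.PosSemidef) (hM : M.PosSemidef) :
    0 ≤ Matrix.trace (B * M) := by
  have hBh : B.IsHermitian := hB.1
  set C := matFun Real.sqrt B with hCdef
  have hCh : C.IsHermitian := matFun_isHermitian hBh _
  have hCC : C * C = B := by
    rw [hCdef, matFun_mul hBh]
    rw [matFun_congr hBh (φ := fun t => t)
      (fun i => Real.mul_self_sqrt (hB.eigenvalues_nonneg i))]
    exact matFun_id hBh
  have h1 : (Cᴴ * M * C).PosSemidef := hM.conjTranspose_mul_mul_same C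
  rw [hCh.eq] at h1
  have h2 : Matrix.trace (C * M * C) = Matrix.trace (B * M) := by
    rw [Matrix.trace_mul_cycle, hCC]
  rw [← h2]
  exact psd_trace_nonneg h1

theorem dot_trace (v : Fin d → ℝ) (M : Matrix (Fin d) (Fin d) ℝ) :
    v ⬝ᵥ (M *ᵥ v) = Matrix.trace (M * Matrix.vecMulVec v v) := by
  simp only [Matrix.trace, Matrix.diag, Matrix.mul_apply, Matrix.vecMulVec_apply,
    dotProduct, Matrix.mulVec, Finset.mul_sum, Finset.sum_mul]
  exact Finset.sum_congr rfl fun a _ => Finset.sum_congr rfl fun b _ => by ring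

theorem vecMulVec_posSemidef (v : Fin d → ℝ) : (Matrix.vecMulVec v v).PosSemidef := by
  simpa using Matrix.posSemidef_vecMulVec_self_star v

theorem matFun_smul_one {δ : ℝ} (ψ : ℝ → ℝ) :
    matFun ψ (δ • (1 : Matrix (Fin d) (Fin d) ℝ)) = ψ δ • 1 := by
  have hA : (δ • (1 : Matrix (Fin d) (Fin d) ℝ)).IsHermitian := by
    unfold Matrix.IsHermitian
    simp [Matrix.conjTranspose_smul]
  have heig : ∀ i, hA.eigenvalues i = δ := by
    intro i
    have hspec := hA.spectral_theorem
    have h1 : star (hA.eigenvectorUnitary : Matrix (Fin d) (Fin d) ℝ) *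
        (δ • (1 : Matrix (Fin d) (Fin d) ℝ)) *
        (hA.eigenvectorUnitary : Matrix (Fin d) (Fin d) ℝ)
        = Matrix.diagonal (fun i => (hA.eigenvalues i : ℝ)) := by
      have := hA.conjStarAlgAut_star_eigenvectorUnitary
      simp only [Unitary.conjStarAlgAut_apply, Unitary.coe_star, star_star] at this
      exact this
    have h2 : star (hA.eigenvectorUnitary : Matrix (Fin d) (Fin d) ℝ) *
        (δ • (1 : Matrix (Fin d) (Fin d) ℝ)) *
        (hA.eigenvectorUnitary : Matrix (Fin d) (Fin d) ℝ)
        = δ • (1 : Matrix (Fin d) (Fin d) ℝ) := by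
      rw [mul_smul_comm, mul_one, smul_mul_assoc,
        Unitary.star_mul_self_of_mem (SetLike.coe_mem _)]
    rw [h2] at h1
    have h3 := congrFun (congrFun h1 i) i
    simpa [Matrix.diagonal, Matrix.one_apply] using h3.symm
  rw [matFun_congr hA (φ := fun _ => ψ δ) (fun i => by rw [heig i]), matFun_const hA]

/-- `ψ(X)⁻¹·X = 1` for positive definite `X` (with `ψ = inv`). -/
theorem invFun_mul_self (hX : X.PosDef) :
    matFun (fun t => t⁻¹) X * X = 1 := by
  have hXh : X.IsHermitian := hX.1
  have h0 := matFun_mul hXh (fun t => t⁻¹) (fun t => t)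
  rw [matFun_id hXh] at h0
  rw [h0, matFun_congr hXh (φ := fun _ => (1:ℝ))
    (fun i => inv_mul_cancel₀ (hX.eigenvalues_pos i).ne'), matFun_one hXh]

/-- single step of the follow-the-leader analysis. -/
theorem step (hB : B.PosSemidef) (hX : X.PosDef) (hY : Y.PosDef)
    (hcomm : B * X = X * B) :
    Matrix.trace (B * matFun (fun t => t⁻¹) X * (X - Y)) ≤
      Matrix.trace (B * matFun Real.log X) - Matrix.trace (B * matFun Real.log Y) := by
  have h1 : B * matFun (fun t => t⁻¹) X * (X - Y)
      = B - B * (matFun (fun t => t⁻¹) X * Y) := by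
    rw [mul_sub]
    congr 1
    · rw [mul_assoc, invFun_mul_self hX, mul_one]
    · rw [mul_assoc]
  rw [h1, Matrix.trace_sub]
  have h2 := key hB hX hY hcomm
  linarith

end FTLaux

namespace FTLaux

variable {d : ℕ} {ℋ : Submodule ℝ (Matrix (Fin d) (Fin d) ℝ)}
  {P : Matrix (Fin d) (Fin d) ℝ →ₗ[ℝ] Matrix (Fin d) (Fin d) ℝ}

theorem pfix (hA1 : AssumptionA1 ℋ P) {M : Matrix (Fin d) (Fin d) ℝ} (hM : M ∈ ℋ) :
    P M = M := by
  set E := M - P M with hE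
  have hmem : E ∈ ℋ := Submodule.sub_mem _ hM (hA1.proj.mem M)
  have h0 : Matrix.trace (E * E) = 0 := hA1.proj.perp M E hmem
  have hh : E.IsHermitian := hA1.symm _ hmem
  have hsymm : ∀ i j, E j i = E i j := by
    intro i j
    have := congrFun (congrFun hh.eq j) i
    simpa [Matrix.conjTranspose_apply] using this.symm
  have hsq : Matrix.trace (E * E) = ∑ i, ∑ j, (E i j)^2 := by
    simp only [Matrix.trace, Matrix.diag, Matrix.mul_apply]
    exact Finset.sum_congr rfl fun i _ => Finset.sum_congr rfl fun j _ => by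
      rw [hsymm i j]; ring
  rw [hsq] at h0
  have hz : ∀ i ∈ Finset.univ, ∀ j ∈ Finset.univ, (E i j)^2 = 0 := by
    have houter := (Finset.sum_eq_zero_iff_of_nonneg
      (fun i _ => Finset.sum_nonneg fun j _ => sq_nonneg (E i j))).1 h0
    intro i hi j hj
    exact (Finset.sum_eq_zero_iff_of_nonneg (fun j _ => sq_nonneg (E i j))).1
      (houter i hi) j hj
  have hE0 : E = 0 := by
    ext i j
    exact pow_eq_zero_iff (two_ne_zero) |>.1 (hz i (Finset.mem_univ i) j (Finset.mem_univ j))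
  have := sub_eq_zero.1 (hE.symm ▸ hE0 : M - P M = 0)
  exact this.symm

theorem jordan (hA1 : AssumptionA1 ℋ P) {M N : Matrix (Fin d) (Fin d) ℝ}
    (hM : M ∈ ℋ) (hN : N ∈ ℋ) (hco : M * N = N * M) : M * N ∈ ℋ := by
  have hMh := hA1.symm M hM
  have hNh := hA1.symm N hN
  have hMN : (M + N).IsHermitian := hMh.add hNh
  have sq_mem : ∀ (K : Matrix (Fin d) (Fin d) ℝ), K ∈ ℋ → K.IsHermitian → K * K ∈ ℋ := by
    intro K hK hKh
    have h1 := hA1.funClosed K hK (fun t => t * t)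
    have h2 := matFun_mul hKh (fun t => t) (fun t => t)
    rw [matFun_id hKh] at h2
    rwa [← h2] at h1
  have h1 : (M + N) * (M + N) ∈ ℋ := sq_mem _ (Submodule.add_mem _ hM hN) hMN
  have h2 : M * M ∈ ℋ := sq_mem _ hM hMh
  have h3 : N * N ∈ ℋ := sq_mem _ hN hNh
  have hident : M * N = (2⁻¹ : ℝ) • ((M + N) * (M + N) - M * M - N * N) := by
    have e1 : (M + N) * (M + N) - M * M - N * N = (2 : ℝ) • (M * N) := by
      rw [add_mul, mul_add, mul_add, ← hco, two_smul]
      abel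
    rw [e1, smul_smul]
    norm_num
  rw [hident]
  exact Submodule.smul_mem _ _ (Submodule.sub_mem _ (Submodule.sub_mem _ h1 h2) h3)

end FTLaux


/-- Lemma 9 (deterministic core): follow-the-leader bound with the log potential,
`Σ_{i≤k} gᵢᵀ B Hᵢ² gᵢ ≤ η² tr(B) ln((η²/δ) tr(H_k^{-1})²)`. -/
theorem ftl_btl_log_bound {d : ℕ}
    (ℋ : Submodule ℝ (Matrix (Fin d) (Fin d) ℝ))
    (P : Matrix (Fin d) (Fin d) ℝ →ₗ[ℝ] Matrix (Fin d) (Fin d) ℝ)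
    (hA1 : AssumptionA1 ℋ P)
    (B : Matrix (Fin d) (Fin d) ℝ) (hBmem : B ∈ ℋ) (hBpd : B.PosDef)
    (hBcomm : ∀ A ∈ ℋ, B * A = A * B)
    (δ η : ℝ) (hδ : 0 < δ) (hη : 0 < η)
    (g : ℕ → Fin d → ℝ)
    (S H : ℕ → Matrix (Fin d) (Fin d) ℝ)
    (hS : ∀ i, S i = ∑ j ∈ Finset.range (i + 1), vecMulVec (g j) (g j))
    (hH : ∀ i, H i = η • matFun (fun t => t ^ (-(1 / 2) : ℝ))
      (δ • (1 : Matrix (Fin d) (Fin d) ℝ) + P (S i)))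
    (k : ℕ) :
    ∑ i ∈ Finset.range (k + 1), g i ⬝ᵥ ((B * (H i * H i)) *ᵥ g i) ≤
      η ^ 2 * Matrix.trace B * Real.log (η ^ 2 / δ * Matrix.trace ((H k)⁻¹) ^ 2) := by
  classical
  rcases Nat.eq_zero_or_pos d with hd | hd
  · subst hd
    simp [Matrix.trace, dotProduct]
  set G : ℕ → Matrix (Fin d) (Fin d) ℝ := fun j => vecMulVec (g j) (g j) with hGdef
  set A : ℕ → Matrix (Fin d) (Fin d) ℝ := fun i => δ • 1 + P (S i) with hAdef
  have hone : (1 : Matrix (Fin d) (Fin d) ℝ) ∈ ℋ := by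
    have h0 := hA1.funClosed 0 (Submodule.zero_mem ℋ) (fun _ => (1:ℝ))
    rwa [FTLaux.matFun_one Matrix.isHermitian_zero] at h0
  have hδ1pd : ((δ : ℝ) • (1 : Matrix (Fin d) (Fin d) ℝ)).PosDef := by
    have hdg : (δ : ℝ) • (1 : Matrix (Fin d) (Fin d) ℝ)
        = Matrix.diagonal (fun _ : Fin d => δ) := by
      ext i j
      by_cases h : i = j <;> simp [Matrix.diagonal, h, Matrix.one_apply]
    rw [hdg]
    exact Matrix.posDef_diagonal_iff.2 fun _ => hδ
  have hSpsd : ∀ i, (S i).PosSemidef := by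
    intro i
    rw [hS i]
    refine Finset.sum_induction _ _ (fun a b ha hb => ha.add hb)
      Matrix.PosSemidef.zero (fun j _ => FTLaux.vecMulVec_posSemidef _)
  have hApd : ∀ i, (A i).PosDef := by
    intro i
    have h1 : ((δ : ℝ) • 1 + S i).PosDef := (hδ1pd).add_posSemidef (hSpsd i)
    have h2 := hA1.posdef _ h1
    have h3 : P ((δ : ℝ) • 1 + S i) = A i := by
      rw [map_add, _root_.map_smul, FTLaux.pfix hA1 hone]
    rwa [h3] at h2
  have hAmem : ∀ i, A i ∈ ℋ := fun i =>
    Submodule.add_mem _ (Submodule.smul_mem _ _ hone) (hA1.proj.mem _)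
  have hABcomm : ∀ i, B * A i = A i * B := fun i => hBcomm _ (hAmem i)
  set invA : ℕ → Matrix (Fin d) (Fin d) ℝ := fun i => matFun (fun t => t⁻¹) (A i) with hinvAdef
  have hinvmem : ∀ i, invA i ∈ ℋ := fun i => hA1.funClosed _ (hAmem i) _
  have hKmem : ∀ i, B * invA i ∈ ℋ := fun i =>
    FTLaux.jordan hA1 hBmem (hinvmem i) (hBcomm _ (hinvmem i))
  -- per-term identity
  have hterm : ∀ i, g i ⬝ᵥ ((B * (H i * H i)) *ᵥ g i)
      = η^2 * Matrix.trace (B * invA i * G i) := by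
    intro i
    have hsq : H i * H i = (η^2) • invA i := by
      rw [hH i]
      have harg : (δ : ℝ) • (1 : Matrix (Fin d) (Fin d) ℝ) + P (S i) = A i := rfl
      rw [harg]
      rw [smul_mul_assoc, mul_smul_comm, smul_smul, FTLaux.matFun_mul (hApd i).1]
      rw [show η * η = η^2 by ring]
      congr 1
      apply FTLaux.matFun_congr
      intro j
      have ht : 0 < (hApd i).1.eigenvalues j := (hApd i).eigenvalues_pos j
      rw [← Real.rpow_add ht]
      norm_num
      rw [Real.rpow_neg_one]
    rw [hsq, mul_smul_comm, Matrix.smul_mulVec, dotProduct_smul, smul_eq_mul,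
      FTLaux.dot_trace]
  have hproj : ∀ i, Matrix.trace (B * invA i * G i)
      = Matrix.trace (B * invA i * P (G i)) := by
    intro i
    have h0 := hA1.proj.perp (G i) _ (hKmem i)
    rw [sub_mul, Matrix.trace_sub] at h0
    have h1 : Matrix.trace (G i * (B * invA i)) = Matrix.trace (P (G i) * (B * invA i)) := by
      linarith
    rw [Matrix.trace_mul_comm (B * invA i) (G i), Matrix.trace_mul_comm (B * invA i) (P (G i))]
    exact h1
  set Φ : ℕ → ℝ := fun i => Matrix.trace (B * matFun Real.log (A i)) with hΦdef
  set Φ0 : ℝ := Matrix.trace (B * matFun Real.log ((δ:ℝ) • 1)) with hΦ0def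
  have hstep0 : Matrix.trace (B * invA 0 * P (G 0)) ≤ Φ 0 - Φ0 := by
    have hS0 : S 0 = G 0 := by rw [hS 0]; simp [hGdef]
    have hPG : P (G 0) = A 0 - (δ:ℝ) • 1 := by
      rw [hAdef]
      simp only [← hS0]
      abel
    rw [hPG]
    exact FTLaux.step hBpd.posSemidef (hApd 0) hδ1pd (hABcomm 0)
  have hstepS : ∀ i, Matrix.trace (B * invA (i+1) * P (G (i+1))) ≤ Φ (i+1) - Φ i := by
    intro i
    have hSsucc : S (i+1) = S i + G (i+1) := by
      rw [hS (i+1), hS i, Finset.sum_range_succ]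
    have hPG : P (G (i+1)) = A (i+1) - A i := by
      rw [hAdef]
      simp only [hSsucc, map_add]
      abel
    rw [hPG]
    exact FTLaux.step hBpd.posSemidef (hApd (i+1)) (hApd i) (hABcomm (i+1))
  have htel : ∀ K : ℕ, ∑ i ∈ Finset.range (K+1),
      Matrix.trace (B * invA i * P (G i)) ≤ Φ K - Φ0 := by
    intro K
    induction K with
    | zero => simpa using hstep0
    | succ n ih =>
      rw [Finset.sum_range_succ]
      have := hstepS n
      linarith
  have hLHS : ∑ i ∈ Finset.range (k+1), g i ⬝ᵥ ((B * (H i * H i)) *ᵥ g i)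
      = η^2 * ∑ i ∈ Finset.range (k+1), Matrix.trace (B * invA i * P (G i)) := by
    rw [Finset.mul_sum]
    exact Finset.sum_congr rfl fun i _ => by rw [hterm i, hproj i]
  -- the eigenvalues of A k
  set lam : Fin d → ℝ := (hApd k).1.eigenvalues with hlamdef
  set s : ℝ := ∑ i, (lam i) ^ ((1:ℝ)/2) with hsdef
  have hlampos : ∀ i, 0 < lam i := fun i => (hApd k).eigenvalues_pos i
  have hspos : 0 < s :=
    Finset.sum_pos (fun i _ => Real.rpow_pos_of_pos (hlampos i) _)
      ⟨⟨0, hd⟩, Finset.mem_univ _⟩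
  have hHkinv : (H k)⁻¹ = η⁻¹ • matFun (fun t => t ^ ((1:ℝ)/2)) (A k) := by
    apply Matrix.inv_eq_right_inv
    rw [hH k]
    have harg : (δ : ℝ) • (1 : Matrix (Fin d) (Fin d) ℝ) + P (S k) = A k := rfl
    rw [harg, smul_mul_assoc, mul_smul_comm, smul_smul, FTLaux.matFun_mul (hApd k).1,
      mul_inv_cancel₀ hη.ne']
    rw [FTLaux.matFun_congr (hApd k).1 (φ := fun _ => (1:ℝ)) (fun j => by
      have ht : 0 < (hApd k).1.eigenvalues j := (hApd k).eigenvalues_pos j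
      rw [← Real.rpow_add ht]
      norm_num), FTLaux.matFun_one (hApd k).1, one_smul]
  have htrHk : Matrix.trace ((H k)⁻¹) = η⁻¹ * s := by
    rw [hHkinv, Matrix.trace_smul, FTLaux.trace_matFun (hApd k).1, smul_eq_mul]
  have hΦ0val : Φ0 = Real.log δ * Matrix.trace B := by
    rw [hΦ0def, FTLaux.matFun_smul_one, mul_smul_comm, mul_one, Matrix.trace_smul, smul_eq_mul]
  have hΦk : Φ k ≤ Matrix.trace B * Real.log (s^2) := by
    set c := Real.log (s^2) with hcdef
    have hval : ∀ i, 0 ≤ c - Real.log ((hApd k).1.eigenvalues i) := by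
      intro i
      have ha : (lam i)^((1:ℝ)/2) ≤ s :=
        Finset.single_le_sum (f := fun j => (lam j)^((1:ℝ)/2))
          (fun j _ => (Real.rpow_pos_of_pos (hlampos j) _).le) (Finset.mem_univ i)
      have hl : lam i ≤ s^2 := by
        have h1 : ((lam i)^((1:ℝ)/2))^(2:ℕ) ≤ s^(2:ℕ) :=
          pow_le_pow_left₀ (Real.rpow_pos_of_pos (hlampos i) _).le ha 2
        have h2 : ((lam i)^((1:ℝ)/2))^(2:ℕ) = lam i := by
          rw [← Real.rpow_natCast ((lam i)^((1:ℝ)/2)) 2, ← Real.rpow_mul (hlampos i).le]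
          norm_num
        rwa [h2] at h1
      have h3 : Real.log (lam i) ≤ c := by
        rw [hcdef]
        exact (Real.log_le_log_iff (hlampos i) (by positivity)).2 hl
      linarith
    have hpsd : (matFun (fun t => c - Real.log t) (A k)).PosSemidef :=
      FTLaux.matFun_posSemidef (hApd k).1 hval
    have h0 := FTLaux.trace_mul_psd_nonneg hBpd.posSemidef hpsd
    rw [FTLaux.matFun_sub (hApd k).1 (fun _ => c) Real.log,
      FTLaux.matFun_const (hApd k).1 c, mul_sub, mul_smul_comm, mul_one,
      Matrix.trace_sub, Matrix.trace_smul, smul_eq_mul] at h0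
    linarith
  -- put everything together
  rw [hLHS, htrHk]
  have hrw : η ^ 2 / δ * (η⁻¹ * s) ^ 2 = s^2/δ := by
    field_simp
  rw [hrw]
  have hlog : Real.log (s^2/δ) = Real.log (s^2) - Real.log δ :=
    Real.log_div (by positivity) hδ.ne'
  have hmain : ∑ i ∈ Finset.range (k+1), Matrix.trace (B * invA i * P (G i))
      ≤ Matrix.trace B * Real.log (s^2/δ) := by
    have h1 := htel k
    rw [hlog, hΦ0val] at *
    nlinarith [hΦk]
  calc η^2 * ∑ i ∈ Finset.range (k+1), Matrix.trace (B * invA i * P (G i))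
      ≤ η^2 * (Matrix.trace B * Real.log (s^2/δ)) :=
        mul_le_mul_of_nonneg_left hmain (sq_nonneg η)
    _ = η ^ 2 * Matrix.trace B * Real.log (s^2/δ) := by ring


end
end

section
/- Let ℋ ⊆ 𝕊 be a linear subspace that is closed under operator functions, i.e., ψ(H) ∈ ℋ for every H ∈ ℋ and every ψ : ℝ → ℝ. If L ∈ ℋ satisfies L H = H L for every H ∈ ℋ, then L H ∈ ℋ for every H ∈ ℋ. -/
open Matrix MeasureTheory
noncomputable section

lemma matFun_sq {d : ℕ} {A : Matrix (Fin d) (Fin d) ℝ} (hA : A.IsHermitian) :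
    matFun (fun t => t * t) A = A * A := by
  rw [matFun, dif_pos hA]
  set U : Matrix (Fin d) (Fin d) ℝ := (hA.eigenvectorUnitary : Matrix (Fin d) (Fin d) ℝ) with hUdef
  set D : Matrix (Fin d) (Fin d) ℝ := Matrix.diagonal (fun i => hA.eigenvalues i) with hDdef
  have hU : star U * U = 1 := (Matrix.mem_unitaryGroup_iff').mp hA.eigenvectorUnitary.2
  have hAeq : A = U * D * star U := by
    conv_lhs => rw [hA.spectral_theorem]
    congr 1
  have hdiag : Matrix.diagonal (fun i => hA.eigenvalues i * hA.eigenvalues i) = D * D := by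
    rw [hDdef, Matrix.diagonal_mul_diagonal]
  rw [hdiag, hAeq]
  calc U * (D * D) * star U = U * D * (star U * U) * D * star U := by
        rw [hU]; noncomm_ring
    _ = U * D * star U * (U * D * star U) := by noncomm_ring

/-- Lemma (commutation closure): if `ℋ` is closed under operator functions and `L ∈ ℋ`
commutes with every element of `ℋ`, then `L H ∈ ℋ` for every `H ∈ ℋ`. -/
theorem mul_mem_of_commute {d : ℕ}
    (ℋ : Submodule ℝ (Matrix (Fin d) (Fin d) ℝ))
    (hsymm : ∀ A ∈ ℋ, A.IsHermitian)
    (hfun : ∀ A ∈ ℋ, ∀ ψ : ℝ → ℝ, matFun ψ A ∈ ℋ)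
    (L : Matrix (Fin d) (Fin d) ℝ) (hL : L ∈ ℋ)
    (hcomm : ∀ A ∈ ℋ, L * A = A * L) :
    ∀ A ∈ ℋ, L * A ∈ ℋ := by
  intro A hA
  have hLA : L + A ∈ ℋ := ℋ.add_mem hL hA
  have hsqL : L * L ∈ ℋ := by
    have := hfun L hL (fun t => t * t)
    rwa [matFun_sq (hsymm L hL)] at this
  have hsqA : A * A ∈ ℋ := by
    have := hfun A hA (fun t => t * t)
    rwa [matFun_sq (hsymm A hA)] at this
  have hsqLA : (L + A) * (L + A) ∈ ℋ := by
    have := hfun (L + A) hLA (fun t => t * t)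
    rwa [matFun_sq (hsymm (L + A) hLA)] at this
  have hc : L * A = A * L := hcomm A hA
  have key : L * A = (2⁻¹ : ℝ) • ((L + A) * (L + A) - L * L - A * A) := by
    have : (L + A) * (L + A) = L * L + L * A + (A * L + A * A) := by noncomm_ring
    rw [this, ← hc]
    module
  rw [key]
  exact ℋ.smul_mem _ (ℋ.sub_mem (ℋ.sub_mem hsqLA hsqL) hsqA)


end
end

section
/- Let γ ∈ (0,1), let η, δ, b, A > 0, and let S ≥ 0 and T > 0 be real numbers with S ≤ η² b ln( (η²/δ) T² ). Define c := max{ e, 2^{3+γ} γ^γ A^{1−γ} δ^{−1/2} b η^{2γ−1} }. Then A^{1−γ} b^{1−γ} S^γ ≤ (1/8) η² T + 2^γ A^{1−γ} b η^{2γ} ln(c). -/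
open Matrix MeasureTheory
noncomputable section

lemma aux_rpow_add_le (x y p : ℝ) (hx : 0 ≤ x) (hy : 0 ≤ y) (hp : 0 ≤ p) (hp1 : p ≤ 1) :
    (x + y) ^ p ≤ x ^ p + y ^ p := by
  have h := NNReal.rpow_add_le_add_rpow x.toNNReal y.toNNReal hp hp1
  have h2 := NNReal.coe_le_coe.mpr h
  push_cast [NNReal.coe_rpow] at h2
  rwa [Real.coe_toNNReal x hx, Real.coe_toNNReal y hy] at h2

lemma aux_key (p u : ℝ) (hp : 0 < p) (hp1 : p ≤ 1) (hu : 0 ≤ u) :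
    u ^ p ≤ (2 * p) ^ p * Real.exp (u / 2) := by
  rcases eq_or_lt_of_le hu with h | h
  · rw [← h, Real.zero_rpow hp.ne']
    positivity
  · have h2p : 0 < 2 * p := by linarith
    have hlog : Real.log (u / (2 * p)) ≤ u / (2 * p) - 1 :=
      Real.log_le_sub_one_of_pos (by positivity)
    rw [Real.log_div h.ne' h2p.ne'] at hlog
    have heq : p * (u / (2 * p) - 1) = u / 2 - p := by
      field_simp
    have key : p * Real.log u ≤ p * Real.log (2 * p) + u / 2 := by
      have h3 := mul_le_mul_of_nonneg_left hlog hp.le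
      rw [heq] at h3
      nlinarith
    rw [Real.rpow_def_of_pos h, Real.rpow_def_of_pos h2p, ← Real.exp_add]
    apply Real.exp_le_exp.mpr
    nlinarith [key]

set_option maxHeartbeats 1000000 in
/-- Lemma 11 (scalar form): the technical inequality used to absorb the trace-log term. -/
theorem scalar_log_absorb_bound
    (γ η δ b A S T : ℝ) (hγ : γ ∈ Set.Ioo (0 : ℝ) 1)
    (hη : 0 < η) (hδ : 0 < δ) (hb : 0 < b) (hA : 0 < A)
    (hS : 0 ≤ S) (hT : 0 < T)
    (hST : S ≤ η ^ 2 * b * Real.log (η ^ 2 / δ * T ^ 2))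
    (c : ℝ)
    (hc : c = max (Real.exp 1)
      ((2 : ℝ) ^ (3 + γ) * γ ^ γ * A ^ (1 - γ) * δ ^ (-(1 / 2) : ℝ) * b * η ^ (2 * γ - 1))) :
    A ^ (1 - γ) * b ^ (1 - γ) * S ^ γ ≤
      (1 / 8) * η ^ 2 * T + 2 ^ γ * A ^ (1 - γ) * b * η ^ (2 * γ) * Real.log c := by
  obtain ⟨hγ0, hγ1⟩ := hγ
  set c₂ : ℝ := (2 : ℝ) ^ (3 + γ) * γ ^ γ * A ^ (1 - γ) * δ ^ (-(1 / 2) : ℝ) * b *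
      η ^ (2 * γ - 1) with hc₂
  have hc₂pos : 0 < c₂ := by positivity
  have hcpos : 0 < c := by
    rw [hc]; exact lt_of_lt_of_le (Real.exp_pos 1) (le_max_left _ _)
  have hc₂c : c₂ ≤ c := by rw [hc]; exact le_max_right _ _
  have hlc1 : 1 ≤ Real.log c := by
    rw [Real.le_log_iff_exp_le hcpos, hc]; exact le_max_left _ _
  have hKpos : (0 : ℝ) < A ^ (1 - γ) * b * η ^ (2 * γ) := by positivity
  rcases eq_or_lt_of_le hS with hS0 | hSpos
  · rw [← hS0, Real.zero_rpow hγ0.ne', mul_zero]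
    have h1 : (0 : ℝ) ≤ (1 / 8) * η ^ 2 * T := by positivity
    have h2 : (0 : ℝ) ≤ 2 ^ γ * A ^ (1 - γ) * b * η ^ (2 * γ) * Real.log c := by
      apply mul_nonneg (by positivity); linarith
    linarith
  · set L : ℝ := Real.log (η ^ 2 / δ * T ^ 2) with hLdef
    have hηb : (0 : ℝ) < η ^ 2 * b := by positivity
    have hL0 : 0 < L := by nlinarith
    -- step 1 : S^γ ≤ η^(2γ) b^γ L^γ
    have hstep1 : S ^ γ ≤ η ^ (2 * γ) * b ^ γ * L ^ γ := by
      have h1 : S ^ γ ≤ (η ^ 2 * b * L) ^ γ := Real.rpow_le_rpow hS hST hγ0.le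
      have h2 : (η ^ 2 * b * L) ^ γ = (η ^ 2) ^ γ * b ^ γ * L ^ γ := by
        rw [Real.mul_rpow (by positivity) hL0.le, Real.mul_rpow (by positivity) hb.le]
      have h3 : (η ^ 2 : ℝ) ^ γ = η ^ (2 * γ) := by
        rw [show (2 : ℝ) * γ = ((2 : ℕ) : ℝ) * γ by norm_num,
          Real.rpow_natCast_mul hη.le 2 γ]
      rw [h2, h3] at h1
      exact h1
    have hbb : b ^ ((1 : ℝ) - γ) * b ^ γ = b := by
      rw [← Real.rpow_add hb]; norm_num
    have hstep2 : A ^ (1 - γ) * b ^ (1 - γ) * S ^ γ ≤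
        A ^ (1 - γ) * b * η ^ (2 * γ) * L ^ γ := by
      calc A ^ (1 - γ) * b ^ (1 - γ) * S ^ γ
          ≤ A ^ (1 - γ) * b ^ (1 - γ) * (η ^ (2 * γ) * b ^ γ * L ^ γ) := by
            apply mul_le_mul_of_nonneg_left hstep1 (by positivity)
        _ = A ^ (1 - γ) * b * η ^ (2 * γ) * L ^ γ := by
            rw [show A ^ (1 - γ) * b ^ (1 - γ) * (η ^ (2 * γ) * b ^ γ * L ^ γ)
              = A ^ (1 - γ) * (b ^ ((1:ℝ) - γ) * b ^ γ) * η ^ (2 * γ) * L ^ γ by ring, hbb]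
    -- exp (L/2) = η T / √δ
    have hx : (0 : ℝ) < η ^ 2 / δ * T ^ 2 := by positivity
    have hsδ : (0 : ℝ) < Real.sqrt δ := Real.sqrt_pos.mpr hδ
    have hE : Real.exp (L / 2) = η * T / Real.sqrt δ := by
      rw [hLdef, ← Real.log_sqrt hx.le, Real.exp_log (Real.sqrt_pos.mpr hx)]
      rw [show η ^ 2 / δ * T ^ 2 = (η * T / Real.sqrt δ) ^ 2 by
        rw [div_pow, mul_pow, Real.sq_sqrt hδ.le]; ring]
      exact Real.sqrt_sq (by positivity)
    have hT8 : η * Real.sqrt δ / 8 * Real.exp (L / 2) = 1 / 8 * η ^ 2 * T := by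
      rw [hE]; field_simp
    -- key coefficient identity
    have hδ1 : Real.sqrt δ * δ ^ (-(1 / 2) : ℝ) = 1 := by
      rw [Real.sqrt_eq_rpow, ← Real.rpow_add hδ]; norm_num
    have hη1 : η ^ (2 * γ - 1) * η = η ^ (2 * γ) := by
      calc η ^ (2 * γ - 1) * η = η ^ (2 * γ - 1) * η ^ (1 : ℝ) := by rw [Real.rpow_one]
        _ = η ^ (2 * γ - 1 + 1) := (Real.rpow_add hη _ _).symm
        _ = η ^ (2 * γ) := by norm_num
    have h8 : (2 : ℝ) ^ (3 + γ) = 8 * 2 ^ γ := by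
      rw [Real.rpow_add two_pos, show (3 : ℝ) = ((3 : ℕ) : ℝ) by norm_num,
        Real.rpow_natCast]
      norm_num
    have h2γ : ((2 : ℝ) * γ) ^ γ = 2 ^ γ * γ ^ γ := Real.mul_rpow (by norm_num) hγ0.le
    have hKc : A ^ (1 - γ) * b * η ^ (2 * γ) * (2 * γ) ^ γ =
        η * Real.sqrt δ / 8 * c₂ := by
      rw [h2γ, hc₂, h8, ← hη1]
      linear_combination (-(A ^ (1 - γ) * b * η ^ (2 * γ - 1) * η * 2 ^ γ * γ ^ γ)) * hδ1
    -- main claim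
    have hmain : A ^ (1 - γ) * b * η ^ (2 * γ) * L ^ γ ≤
        η * Real.sqrt δ / 8 * Real.exp (L / 2) +
          2 ^ γ * (A ^ (1 - γ) * b * η ^ (2 * γ)) * Real.log c := by
      set lc := Real.log c with hlc
      set K := A ^ (1 - γ) * b * η ^ (2 * γ) with hK
      have hlogbd : (2 * lc) ^ γ ≤ 2 ^ γ * lc := by
        rw [Real.mul_rpow (by norm_num) (by linarith)]
        have := Real.rpow_le_rpow_of_exponent_le hlc1 hγ1.le
        rw [Real.rpow_one] at this
        have h2γpos : (0 : ℝ) ≤ (2 : ℝ) ^ γ := by positivity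
        nlinarith
      by_cases hcase : L ≤ 2 * lc
      · have h1 : L ^ γ ≤ 2 ^ γ * lc :=
          le_trans (Real.rpow_le_rpow hL0.le hcase hγ0.le) hlogbd
        have h2 : (0 : ℝ) ≤ η * Real.sqrt δ / 8 * Real.exp (L / 2) := by positivity
        nlinarith [mul_le_mul_of_nonneg_left h1 hKpos.le]
      · push_neg at hcase
        have hupos : 0 < L - 2 * lc := by linarith
        have hsub : L ^ γ ≤ (2 * lc) ^ γ + (L - 2 * lc) ^ γ := by
          have h := aux_rpow_add_le (2 * lc) (L - 2 * lc) γ (by linarith) hupos.le hγ0.le hγ1.le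
          rw [show 2 * lc + (L - 2 * lc) = L from by ring] at h
          exact h
        have hukey : (L - 2 * lc) ^ γ ≤ (2 * γ) ^ γ * Real.exp ((L - 2 * lc) / 2) :=
          aux_key γ (L - 2 * lc) hγ0 hγ1.le hupos.le
        have hexpL : Real.exp (L / 2) = c * Real.exp ((L - 2 * lc) / 2) := by
          rw [show L / 2 = lc + (L - 2 * lc) / 2 from by ring, Real.exp_add, hlc,
            Real.exp_log hcpos]
        have htail : K * (L - 2 * lc) ^ γ ≤ η * Real.sqrt δ / 8 * Real.exp (L / 2) := by
          calc K * (L - 2 * lc) ^ γ ≤ K * ((2 * γ) ^ γ * Real.exp ((L - 2 * lc) / 2)) := by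
                apply mul_le_mul_of_nonneg_left hukey hKpos.le
            _ = η * Real.sqrt δ / 8 * c₂ * Real.exp ((L - 2 * lc) / 2) := by rw [← mul_assoc, hKc]
            _ ≤ η * Real.sqrt δ / 8 * c * Real.exp ((L - 2 * lc) / 2) := by
                have : (0:ℝ) ≤ η * Real.sqrt δ / 8 * Real.exp ((L - 2 * lc) / 2) := by positivity
                nlinarith
            _ = η * Real.sqrt δ / 8 * Real.exp (L / 2) := by rw [hexpL]; ring
        have hhead : K * (2 * lc) ^ γ ≤ 2 ^ γ * K * lc := by
          have := mul_le_mul_of_nonneg_left hlogbd hKpos.le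
          nlinarith
        have hdist : K * L ^ γ ≤ K * (2 * lc) ^ γ + K * (L - 2 * lc) ^ γ := by
          nlinarith [mul_le_mul_of_nonneg_left hsub hKpos.le]
        linarith
    calc A ^ (1 - γ) * b ^ (1 - γ) * S ^ γ
        ≤ A ^ (1 - γ) * b * η ^ (2 * γ) * L ^ γ := hstep2
      _ ≤ η * Real.sqrt δ / 8 * Real.exp (L / 2) +
            2 ^ γ * (A ^ (1 - γ) * b * η ^ (2 * γ)) * Real.log c := hmain
      _ = 1 / 8 * η ^ 2 * T + 2 ^ γ * A ^ (1 - γ) * b * η ^ (2 * γ) * Real.log c := by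
          rw [hT8]; ring

end
end

section
/- Equip ℝ^{m×n} with the Frobenius inner product ⟨X,Y⟩ = tr(X Yᵀ), and consider the real inner-product space of linear operators ℝ^{m×n} → ℝ^{m×n} with the Hilbert–Schmidt inner product. Let ℋ_A := { G ↦ B G : B an m×m symmetric matrix } and ℋ_D := { G ↦ diag(b) G : b ∈ ℝ^m }. For X ∈ ℝ^{m×n}, let T_X be the rank-one operator G ↦ ⟨X, G⟩ X. Then the orthogonal projection of T_X onto ℋ_A is the operator G ↦ (1/n)(X Xᵀ) G, the orthogonal projection of T_X onto ℋ_D is the operator G ↦ (1/n) diag(‖X_{1,:}‖², …, ‖X_{m,:}‖²) G, and consequently ‖P_{ℋ_A}(T_X)‖_op^{1/2} = σ_max(X)/√n and ‖P_{ℋ_D}(T_X)‖_op^{1/2} = (1/√n) max_{1≤i≤m} ‖X_{i,:}‖₂, where σ_max(X) is the largest singular value of X, X_{i,:} are the rows of X, and ‖·‖_op is the operator norm of a linear map on (ℝ^{m×n}, Frobenius norm). -/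
open Matrix
noncomputable section

/-- Frobenius inner product on `ℝ^{m×n}`: `⟨X,Y⟩ = tr(X Yᵀ)`. -/
def finner {m n : ℕ} (X Y : Matrix (Fin m) (Fin n) ℝ) : ℝ := Matrix.trace (X * Yᵀ)

/-- Frobenius norm. -/
def frobNorm {m n : ℕ} (X : Matrix (Fin m) (Fin n) ℝ) : ℝ := Real.sqrt (finner X X)

/-- Hilbert–Schmidt inner product of two linear operators on `ℝ^{m×n}`, computed
over the standard basis `E_{ij}`. -/
def hsInner {m n : ℕ}
    (S T : Matrix (Fin m) (Fin n) ℝ →ₗ[ℝ] Matrix (Fin m) (Fin n) ℝ) : ℝ :=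
  ∑ i : Fin m, ∑ j : Fin n,
    finner (S (Matrix.single i j 1)) (T (Matrix.single i j 1))

/-- The operator `G ↦ B G` of left multiplication by an `m×m` matrix. -/
def lmulOp {m n : ℕ} (B : Matrix (Fin m) (Fin m) ℝ) :
    Matrix (Fin m) (Fin n) ℝ →ₗ[ℝ] Matrix (Fin m) (Fin n) ℝ where
  toFun G := B * G
  map_add' := by intro a b; exact Matrix.mul_add B a b
  map_smul' := by intro c a; simp [Matrix.mul_smul]

/-- The rank-one operator `T_X : G ↦ ⟨X, G⟩ X`. -/
def rankOne {m n : ℕ} (X : Matrix (Fin m) (Fin n) ℝ) :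
    Matrix (Fin m) (Fin n) ℝ →ₗ[ℝ] Matrix (Fin m) (Fin n) ℝ where
  toFun G := finner X G • X
  map_add' := by
    intro a b
    simp [finner, Matrix.transpose_add, Matrix.mul_add, add_smul]
  map_smul' := by
    intro c a
    simp [finner, Matrix.transpose_smul, Matrix.mul_smul, smul_smul]

/-- Operator norm of a linear operator on `ℝ^{m×n}` equipped with the Frobenius norm. -/
def opNormHS {m n : ℕ}
    (T : Matrix (Fin m) (Fin n) ℝ →ₗ[ℝ] Matrix (Fin m) (Fin n) ℝ) : ℝ :=
  sSup ((fun G => frobNorm (T G)) '' {G | frobNorm G ≤ 1})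

/-- Largest singular value of `X`: the operator norm of `X` as a map
`(ℝⁿ, ‖·‖₂) → (ℝᵐ, ‖·‖₂)`. -/
def sigmaMax {m n : ℕ} (X : Matrix (Fin m) (Fin n) ℝ) : ℝ :=
  ‖LinearMap.toContinuousLinearMap (Matrix.toEuclideanLin X)‖

lemma finner_eq_sum {m n : ℕ} (X Y : Matrix (Fin m) (Fin n) ℝ) :
    finner X Y = ∑ i, ∑ j, X i j * Y i j := by
  simp [finner, Matrix.trace, Matrix.mul_apply, Matrix.diag]

lemma hs_key {m n : ℕ} (X : Matrix (Fin m) (Fin n) ℝ) (C B : Matrix (Fin m) (Fin m) ℝ) :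
    hsInner (rankOne X - lmulOp C) (lmulOp B) =
      (∑ i, ∑ k, B k i * ∑ j, X i j * X k j) - (n : ℝ) * ∑ i, ∑ k, B k i * C k i := by
  simp only [hsInner, LinearMap.sub_apply, rankOne, lmulOp, LinearMap.coe_mk, AddHom.coe_mk,
    finner_eq_sum, Matrix.sub_apply, Matrix.smul_apply, Matrix.mul_apply,
    Matrix.single, Matrix.of_apply, smul_eq_mul]
  simp only [mul_ite, mul_one, mul_zero, ite_and, Finset.sum_ite_eq', Finset.sum_ite_eq,
    Finset.mem_univ, if_true, sub_mul, Finset.sum_sub_distrib, Finset.mul_sum, Finset.sum_mul]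
  simp only [ite_mul, zero_mul, Finset.sum_ite_eq, Finset.sum_ite_eq', Finset.mem_univ,
    if_true, Finset.sum_const, Finset.card_univ, Fintype.card_fin, nsmul_eq_mul, Finset.mul_sum]
  congr 1
  · exact Finset.sum_congr rfl fun x _ => Finset.sum_comm.trans
      (Finset.sum_congr rfl fun k _ => Finset.sum_congr rfl fun j _ => by simp; ring)
  · exact Finset.sum_congr rfl fun x _ => Finset.sum_congr rfl fun k _ => by ring

lemma frobNorm_eq {m n : ℕ} (X : Matrix (Fin m) (Fin n) ℝ) :
    frobNorm X = Real.sqrt (∑ i, ∑ j, X i j ^ 2) := by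
  simp [frobNorm, finner_eq_sum, sq]

lemma norm_symm_sq {m : ℕ} (w : Fin m → ℝ) :
    ‖(WithLp.equiv 2 (Fin m → ℝ)).symm w‖ ^ 2 = ∑ i, w i ^ 2 := by
  rw [EuclideanSpace.norm_eq, Real.sq_sqrt (by positivity)]
  simp [sq_abs]

lemma clm_apply_sq {m k : ℕ} (B : Matrix (Fin k) (Fin m) ℝ) (w : Fin m → ℝ) :
    ‖LinearMap.toContinuousLinearMap (Matrix.toEuclideanLin B)
        ((WithLp.equiv 2 (Fin m → ℝ)).symm w)‖ ^ 2 = ∑ i, (∑ j, B i j * w j) ^ 2 := by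
  rw [LinearMap.coe_toContinuousLinearMap']
  show ‖(WithLp.equiv 2 (Fin k → ℝ)).symm (B *ᵥ w)‖ ^ 2 = _
  rw [norm_symm_sq]
  simp [Matrix.mulVec, dotProduct]

lemma frobNorm_mul_le {m n : ℕ} (B : Matrix (Fin m) (Fin m) ℝ)
    (G : Matrix (Fin m) (Fin n) ℝ) :
    frobNorm (B * G) ≤
      ‖LinearMap.toContinuousLinearMap (Matrix.toEuclideanLin B)‖ * frobNorm G := by
  set f := LinearMap.toContinuousLinearMap (Matrix.toEuclideanLin B) with hf
  have hkey : ∑ i, ∑ j, (B * G) i j ^ 2 ≤ ‖f‖ ^ 2 * ∑ i, ∑ j, G i j ^ 2 := by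
    rw [Finset.sum_comm, Finset.sum_comm (γ := Fin m)]
    calc ∑ j, ∑ i, (B * G) i j ^ 2
        = ∑ j : Fin n, ‖f ((WithLp.equiv 2 (Fin m → ℝ)).symm (fun i => G i j))‖ ^ 2 := by
          refine Finset.sum_congr rfl fun j _ => ?_
          rw [clm_apply_sq]
          exact Finset.sum_congr rfl fun i _ => by rw [Matrix.mul_apply]
      _ ≤ ∑ j : Fin n, (‖f‖ * ‖(WithLp.equiv 2 (Fin m → ℝ)).symm (fun i => G i j)‖) ^ 2 :=
          Finset.sum_le_sum fun j _ =>
              pow_le_pow_left₀ (norm_nonneg _) (f.le_opNorm _) 2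
      _ = ‖f‖ ^ 2 * ∑ j, ∑ i, G i j ^ 2 := by
          rw [Finset.mul_sum]
          refine Finset.sum_congr rfl fun j _ => ?_
          rw [mul_pow, norm_symm_sq]
  rw [frobNorm_eq, frobNorm_eq]
  calc Real.sqrt (∑ i, ∑ j, (B * G) i j ^ 2) ≤ Real.sqrt (‖f‖ ^ 2 * ∑ i, ∑ j, G i j ^ 2) :=
        Real.sqrt_le_sqrt hkey
    _ = ‖f‖ * Real.sqrt (∑ i, ∑ j, G i j ^ 2) := by
        rw [Real.sqrt_mul (by positivity), Real.sqrt_sq (norm_nonneg _)]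

lemma opNormHS_lmulOp {m n : ℕ} (hn : 0 < n) (B : Matrix (Fin m) (Fin m) ℝ) :
    opNormHS (lmulOp B : Matrix (Fin m) (Fin n) ℝ →ₗ[ℝ] Matrix (Fin m) (Fin n) ℝ) =
      ‖LinearMap.toContinuousLinearMap (Matrix.toEuclideanLin B)‖ := by
  set f := LinearMap.toContinuousLinearMap (Matrix.toEuclideanLin B) with hf
  have hop : ∀ G : Matrix (Fin m) (Fin n) ℝ, (lmulOp B) G = B * G := fun _ => rfl
  have hzero : frobNorm (0 : Matrix (Fin m) (Fin n) ℝ) = 0 := by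
    simp [frobNorm_eq]
  have hbdd : BddAbove ((fun G => frobNorm ((lmulOp B : Matrix (Fin m) (Fin n) ℝ →ₗ[ℝ] _) G))
      '' {G | frobNorm G ≤ 1}) := by
    refine ⟨‖f‖, ?_⟩
    rintro x ⟨G, hG, rfl⟩
    calc frobNorm ((lmulOp B) G) ≤ ‖f‖ * frobNorm G := frobNorm_mul_le B G
      _ ≤ ‖f‖ * 1 := by
          exact mul_le_mul_of_nonneg_left hG (norm_nonneg _)
      _ = ‖f‖ := mul_one _
  have hne : ((fun G => frobNorm ((lmulOp B : Matrix (Fin m) (Fin n) ℝ →ₗ[ℝ] _) G))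
      '' {G | frobNorm G ≤ 1}).Nonempty :=
    ⟨_, ⟨0, by simp [Set.mem_setOf_eq, hzero], rfl⟩⟩
  refine le_antisymm ?_ ?_
  · refine csSup_le hne ?_
    rintro x ⟨G, hG, rfl⟩
    calc frobNorm ((lmulOp B) G) ≤ ‖f‖ * frobNorm G := frobNorm_mul_le B G
      _ ≤ ‖f‖ * 1 := mul_le_mul_of_nonneg_left hG (norm_nonneg _)
      _ = ‖f‖ := mul_one _
  · rw [← ContinuousLinearMap.sSup_unitClosedBall_eq_norm f]
    refine csSup_le ⟨‖f 0‖, ⟨0, by simp, rfl⟩⟩ ?_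
    rintro x ⟨v, hv, rfl⟩
    rw [Metric.mem_closedBall, dist_zero_right] at hv
    set j0 : Fin n := ⟨0, hn⟩
    set G : Matrix (Fin m) (Fin n) ℝ :=
      Matrix.of (fun i j => if j = j0 then (WithLp.equiv 2 (Fin m → ℝ)) v i else 0) with hG
    have hcol : (WithLp.equiv 2 (Fin m → ℝ)).symm (fun i => G i j0) = v := by
      have h1 : (fun i => G i j0) = WithLp.equiv 2 (Fin m → ℝ) v := by
        funext i; simp [hG]
      rw [h1, Equiv.symm_apply_apply]
    have hGnorm : frobNorm G = ‖v‖ := by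
      rw [frobNorm_eq, ← Real.sqrt_sq (norm_nonneg v), ← hcol, norm_symm_sq]
      congr 1
      rw [Finset.sum_comm]
      rw [Finset.sum_eq_single j0 (fun b _ hb => by
        refine Finset.sum_eq_zero fun i _ => ?_
        simp [hG, hb]) (fun h => absurd (Finset.mem_univ _) h)]
    have hBG : frobNorm (B * G) = ‖f v‖ := by
      rw [frobNorm_eq, ← Real.sqrt_sq (norm_nonneg (f v)), ← hcol, clm_apply_sq]
      congr 1
      rw [Finset.sum_comm]
      rw [Finset.sum_eq_single j0 (fun b _ hb => by
        refine Finset.sum_eq_zero fun i _ => ?_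
        rw [Matrix.mul_apply]
        simp [hG, hb]) (fun h => absurd (Finset.mem_univ _) h)]
      exact Finset.sum_congr rfl fun i _ => by rw [Matrix.mul_apply]
    refine le_csSup hbdd ?_
    exact ⟨G, by simp [Set.mem_setOf_eq, hGnorm, hv], by simpa [hop] using hBG⟩

lemma toEuclideanLin_mul {k l p : ℕ} (A : Matrix (Fin k) (Fin l) ℝ)
    (B : Matrix (Fin l) (Fin p) ℝ) :
    Matrix.toEuclideanLin (A * B) =
      (Matrix.toEuclideanLin A).comp (Matrix.toEuclideanLin B) := by
  apply LinearMap.ext fun v => ?_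
  simp [Matrix.toEuclideanLin_apply, Matrix.mulVec_mulVec]

lemma toCLM_comp {k l p : ℕ} (f : EuclideanSpace ℝ (Fin l) →ₗ[ℝ] EuclideanSpace ℝ (Fin k))
    (g : EuclideanSpace ℝ (Fin p) →ₗ[ℝ] EuclideanSpace ℝ (Fin l)) :
    LinearMap.toContinuousLinearMap (f ∘ₗ g) =
      (LinearMap.toContinuousLinearMap f).comp (LinearMap.toContinuousLinearMap g) := by
  ext v; rfl

lemma norm_clm_mul_transpose {m n : ℕ} (X : Matrix (Fin m) (Fin n) ℝ) :
    ‖LinearMap.toContinuousLinearMap (Matrix.toEuclideanLin (X * Xᵀ))‖ = sigmaMax X ^ 2 := by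
  have h1 : Xᵀ = Xᴴ := (Matrix.conjTranspose_eq_transpose_of_trivial X).symm
  set A := LinearMap.toContinuousLinearMap (Matrix.toEuclideanLin X) with hA
  have h2 : LinearMap.toContinuousLinearMap (Matrix.toEuclideanLin (X * Xᵀ)) =
      A.comp (ContinuousLinearMap.adjoint A) := by
    rw [toEuclideanLin_mul, toCLM_comp, h1, Matrix.toEuclideanLin_conjTranspose_eq_adjoint,
      LinearMap.adjoint_toContinuousLinearMap]
  rw [h2]
  have h3 := ContinuousLinearMap.norm_adjoint_comp_self (ContinuousLinearMap.adjoint A)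
  rw [ContinuousLinearMap.adjoint_adjoint] at h3
  rw [h3, LinearIsometryEquiv.norm_map, sigmaMax, ← hA, sq]

lemma sigmaMax_nonneg {m n : ℕ} (X : Matrix (Fin m) (Fin n) ℝ) : 0 ≤ sigmaMax X :=
  norm_nonneg _

lemma norm_clm_diagonal {m : ℕ} (hm : 0 < m) (d : Fin m → ℝ) (hd : ∀ i, 0 ≤ d i) :
    ‖LinearMap.toContinuousLinearMap (Matrix.toEuclideanLin (Matrix.diagonal d))‖ =
      ⨆ i, d i := by
  haveI : Nonempty (Fin m) := ⟨⟨0, hm⟩⟩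
  set f := LinearMap.toContinuousLinearMap (Matrix.toEuclideanLin (Matrix.diagonal d)) with hf
  set s := ⨆ i, d i with hs
  have hbdd : BddAbove (Set.range d) := (Set.finite_range d).bddAbove
  have hle : ∀ i, d i ≤ s := fun i => le_ciSup hbdd i
  have hs0 : 0 ≤ s := le_trans (hd ⟨0, hm⟩) (hle _)
  refine le_antisymm ?_ ?_
  · refine f.opNorm_le_bound hs0 fun v => ?_
    have hv : (WithLp.equiv 2 (Fin m → ℝ)).symm (fun i => v i) = v := by
      have h1 : (fun i => v i) = WithLp.equiv 2 (Fin m → ℝ) v := rfl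
      rw [h1, Equiv.symm_apply_apply]
    have h2 : ‖f v‖ ^ 2 ≤ (s * ‖v‖) ^ 2 := by
      rw [← hv, clm_apply_sq, mul_pow, ← hv, norm_symm_sq, Finset.mul_sum]
      simp only [WithLp.equiv_symm_apply, PiLp.toLp_apply]
      refine Finset.sum_le_sum fun i _ => ?_
      have h3 : ∑ j, Matrix.diagonal d i j * v j = d i * v i := by
        rw [Finset.sum_eq_single i (fun b _ hb => by simp [Matrix.diagonal_apply_ne' d hb])
          (fun h => absurd (Finset.mem_univ _) h), Matrix.diagonal_apply_eq]
      rw [h3, mul_pow]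
      exact mul_le_mul_of_nonneg_right (pow_le_pow_left₀ (hd i) (hle i) 2) (sq_nonneg _)
    have := Real.sqrt_le_sqrt h2
    rwa [Real.sqrt_sq (norm_nonneg _), Real.sqrt_sq (by positivity)] at this
  · refine ciSup_le fun i => ?_
    set e : EuclideanSpace ℝ (Fin m) := (WithLp.equiv 2 (Fin m → ℝ)).symm (Pi.single i 1) with he
    have he1 : ‖e‖ = 1 := by
      rw [← Real.sqrt_sq (norm_nonneg e), he, norm_symm_sq]
      rw [Finset.sum_eq_single i (fun b _ hb => by simp [Pi.single_eq_of_ne hb])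
        (fun h => absurd (Finset.mem_univ _) h)]
      simp
    have he2 : ‖f e‖ = d i := by
      rw [← Real.sqrt_sq (norm_nonneg (f e)), he, clm_apply_sq]
      rw [Finset.sum_eq_single i (fun b _ hb => by
        refine pow_eq_zero_iff (n := 2) (by norm_num) |>.2 ?_
        refine Finset.sum_eq_zero fun j _ => ?_
        rcases eq_or_ne j i with rfl | hji
        · simp [Matrix.diagonal_apply_ne d hb]
        · simp [Pi.single_eq_of_ne hji])
        (fun h => absurd (Finset.mem_univ _) h)]
      rw [Finset.sum_eq_single i (fun b _ hb => by simp [Pi.single_eq_of_ne hb])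
        (fun h => absurd (Finset.mem_univ _) h)]
      simp [Real.sqrt_sq (hd i)]
    calc d i = ‖f e‖ := he2.symm
      _ ≤ ‖f‖ * ‖e‖ := f.le_opNorm e
      _ = ‖f‖ := by rw [he1, mul_one]

lemma sqrt_ciSup {m : ℕ} (hm : 0 < m) (d : Fin m → ℝ) :
    Real.sqrt (⨆ i, d i) = ⨆ i, Real.sqrt (d i) := by
  haveI : Nonempty (Fin m) := ⟨⟨0, hm⟩⟩
  exact Monotone.map_ciSup_of_continuousAt (Real.continuous_sqrt.continuousAt)
    (fun a b h => Real.sqrt_le_sqrt h) ((Set.finite_range d).bddAbove)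

/-- Table 1, ASGO/One-sided Shampoo and DASGO rows: the orthogonal projections of the
rank-one operator `T_X` onto `ℋ_A = {G ↦ BG : B symmetric}` and
`ℋ_D = {G ↦ diag(b) G : b ∈ ℝᵐ}`, and the resulting norms
`R(X) = σ_max(X)/√n` and `R(X) = ‖X‖_{2→∞}/√n` respectively. -/
theorem table1_ASGO_DASGO_rows {m n : ℕ} (hm : 0 < m) (hn : 0 < n)
    (X : Matrix (Fin m) (Fin n) ℝ)
    (HA HD : Set (Matrix (Fin m) (Fin n) ℝ →ₗ[ℝ] Matrix (Fin m) (Fin n) ℝ))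
    (hHA : HA = {T | ∃ B : Matrix (Fin m) (Fin m) ℝ, B.IsSymm ∧ T = lmulOp B})
    (hHD : HD = {T | ∃ b : Fin m → ℝ, T = lmulOp (Matrix.diagonal b)})
    (PA PD : Matrix (Fin m) (Fin n) ℝ →ₗ[ℝ] Matrix (Fin m) (Fin n) ℝ)
    (hPA : PA = lmulOp ((n : ℝ)⁻¹ • (X * Xᵀ)))
    (hPD : PD = lmulOp ((n : ℝ)⁻¹ • Matrix.diagonal fun i => ∑ j, X i j ^ 2)) :
    (PA ∈ HA ∧ ∀ T ∈ HA, hsInner (rankOne X - PA) T = 0) ∧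
    (PD ∈ HD ∧ ∀ T ∈ HD, hsInner (rankOne X - PD) T = 0) ∧
    Real.sqrt (opNormHS PA) = sigmaMax X / Real.sqrt n ∧
    Real.sqrt (opNormHS PD) =
      (Real.sqrt n)⁻¹ * ⨆ i : Fin m, Real.sqrt (∑ j, X i j ^ 2) := by
  subst hHA hHD hPA hPD
  have hn' : (n : ℝ) ≠ 0 := Nat.cast_ne_zero.2 hn.ne'
  refine ⟨⟨?_, ?_⟩, ⟨?_, ?_⟩, ?_, ?_⟩
  · exact ⟨(n : ℝ)⁻¹ • (X * Xᵀ), by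
      simp [Matrix.IsSymm, Matrix.transpose_smul, Matrix.transpose_mul,
        Matrix.transpose_transpose], rfl⟩
  · rintro T ⟨B, hB, rfl⟩
    rw [hs_key, sub_eq_zero, Finset.mul_sum]
    refine Finset.sum_congr rfl fun i _ => ?_
    rw [Finset.mul_sum]
    refine Finset.sum_congr rfl fun k _ => ?_
    simp only [Matrix.smul_apply, Matrix.mul_apply, Matrix.transpose_apply, smul_eq_mul]
    rw [Finset.sum_congr rfl fun j (_ : j ∈ Finset.univ) => mul_comm (X i j) (X k j)]
    field_simp
  · exact ⟨(n : ℝ)⁻¹ • fun i => ∑ j, X i j ^ 2, by rw [Matrix.diagonal_smul]⟩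
  · rintro T ⟨b, rfl⟩
    rw [hs_key, sub_eq_zero, Finset.mul_sum]
    refine Finset.sum_congr rfl fun i _ => ?_
    rw [Finset.mul_sum]
    simp only [Matrix.smul_apply, Matrix.diagonal_apply, smul_eq_mul, ite_mul, zero_mul,
      mul_ite, mul_zero, Finset.sum_ite_eq', Finset.mem_univ, if_true]
    have hsq : ∀ j, X i j * X i j = X i j ^ 2 := fun j => (sq (X i j)).symm
    rw [Finset.sum_congr rfl fun j _ => hsq j]
    field_simp
  · rw [opNormHS_lmulOp hn, _root_.map_smul, _root_.map_smul, norm_smul ((n:ℝ)⁻¹) (LinearMap.toContinuousLinearMap (Matrix.toEuclideanLin (X * Xᵀ))), norm_clm_mul_transpose,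
      Real.norm_eq_abs, abs_of_nonneg (by positivity : (0:ℝ) ≤ (n:ℝ)⁻¹),
      Real.sqrt_mul (by positivity) _, Real.sqrt_inv, Real.sqrt_sq (sigmaMax_nonneg X),
      inv_mul_eq_div]
  · rw [opNormHS_lmulOp hn, _root_.map_smul, _root_.map_smul, norm_smul ((n:ℝ)⁻¹) (LinearMap.toContinuousLinearMap (Matrix.toEuclideanLin (Matrix.diagonal fun i => ∑ j, X i j ^ 2))),
      norm_clm_diagonal hm _ (fun i => by positivity),
      Real.norm_eq_abs, abs_of_nonneg (by positivity : (0:ℝ) ≤ (n:ℝ)⁻¹),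
      Real.sqrt_mul (by positivity) _, Real.sqrt_inv, sqrt_ciSup hm]

end
end
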